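/- Let m ≥ 3 be an integer and let r be an odd natural number. Then the permutation π_a of Z_{2^m} given by multiplication by a = 3^r has cycle type x_1^2 · x_2 · Π_{l=3}^{m} x_{2^{l−2}}^2; that is, it has exactly 2 fixed points, exactly one 2-cycle, and for each l with 3 ≤ l ≤ m exactly two cycles of length 2^{l−2}. -/

import Mathlib

/-!
Multiplication by the unit `a = 3 ^ r` preserves the additive order of `x ∈ ℤ/2^m`, and on
the elements of additive order `2 ^ l` the cycle length is the multiplicative order of `a`
modulo `2 ^ l`: it is `1` for `l ≤ 1`, `2` for `l = 2` and `2 ^ (l - 2)` for `l ≥ 3` (as `r`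
is odd, `a` has the order of `3`). The elements `2 ^ (m - 2)` and `±2 ^ (m - l)`,
`3 ≤ l ≤ m`, lie in distinct cycles; for the two signs this is because `-1` is not a power
of `3` modulo `8`. The lengths of these cycles add up to `2 ^ m - 2`, the number of
non-fixed points (the fixed points are the solutions of `2 x = 0`), so there are no other
cycles.
-/

open Finset

namespace Equiv.Perm

variable {α ι : Type*} [Fintype α] [DecidableEq α]

theorem cycleType_eq_sum_of_pairwise_not_sameCycle (σ : Perm α) (t : Finset ι) (x : ι → α)
    (hmem : ∀ i ∈ t, x i ∈ σ.support)
    (hdisj : (t : Set ι).Pairwise fun i j => ¬σ.SameCycle (x i) (x j))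
    (hcard : #σ.support ≤ ∑ i ∈ t, #(σ.cycleOf (x i)).support) :
    σ.cycleType = ∑ i ∈ t, {#(σ.cycleOf (x i)).support} := by
  set c : ι → Perm α := fun i => σ.cycleOf (x i)
  have hinj : Set.InjOn c t := by
    intro i hi j hj hij
    by_contra hne
    refine hdisj hi hj hne (mem_support_cycleOf_iff.mp ?_).1
    rw [show σ.cycleOf (x i) = σ.cycleOf (x j) from hij]
    exact mem_support_cycleOf_iff.mpr ⟨SameCycle.refl σ (x j), hmem j hj⟩
  have hsub : t.image c ⊆ σ.cycleFactorsFinset := by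
    simpa [c, image_subset_iff, cycleOf_mem_cycleFactorsFinset_iff] using hmem
  -- the cycles through the `x i` already exhaust the support, so there is no room for another
  have heq : t.image c = σ.cycleFactorsFinset := by
    by_contra hne
    obtain ⟨d, hd, hdn⟩ := exists_of_ssubset (hsub.ssubset_of_ne hne)
    have hlt := sum_lt_sum_of_subset (f := fun d : Perm α => #d.support) hsub hd hdn
      (card_pos.mpr (mem_cycleFactorsFinset_iff.mp hd).1.nonempty_support) (by simp)
    rw [sum_image hinj] at hlt
    rw [← sum_cycleType, cycleType_def] at hcard
    exact hlt.not_ge hcard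
  rw [cycleType_def, ← heq, image_val_of_injOn hinj, Multiset.map_map, sum_eq_multiset_sum]
  exact (Multiset.sum_map_singleton _).symm.trans (congrArg Multiset.sum (Multiset.map_map _ _ _))

theorem card_support_cycleOf_eq_of_pow_apply_eq_self_iff {σ : Perm α} {x : α} {n : ℕ}
    (hn : n ≠ 1) (h : ∀ k : ℕ, (σ ^ k) x = x ↔ n ∣ k) : #(σ.cycleOf x).support = n := by
  have hx : σ x ≠ x := fun hx => hn (Nat.dvd_one.mp ((h 1).mp (by simpa using hx)))
  have hcycle := isCycle_cycleOf σ hx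
  refine Nat.dvd_antisymm ?_ ((h _).mp ?_)
  · rw [← hcycle.orderOf]
    refine orderOf_dvd_of_pow_eq_one (hcycle.pow_eq_one_iff.mpr ⟨x, ?_, ?_⟩)
    · simpa using hx
    · rw [cycleOf_pow_apply_self]; exact (h n).mpr dvd_rfl
  · simpa using (pow_mod_card_support_cycleOf_self_apply σ #(σ.cycleOf x).support x).symm

end Equiv.Perm

namespace MulAction

variable {G α : Type*} [Group G] [MulAction G α]

theorem toPerm_pow_apply (g : G) (k : ℕ) (x : α) :
    (toPerm g ^ k : Equiv.Perm α) x = g ^ k • x := by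
  rw [← toPermHom_apply, ← map_pow]; rfl

theorem toPerm_zpow_apply (g : G) (k : ℤ) (x : α) :
    (toPerm g ^ k : Equiv.Perm α) x = g ^ k • x := by
  rw [← toPermHom_apply, ← map_zpow]; rfl

end MulAction

section Units

variable {R : Type*} [Ring R]

theorem addOrderOf_units_mul (u : Rˣ) (x : R) : addOrderOf ((u : R) * x) = addOrderOf x :=
  addOrderOf_injective (AddMonoidHom.mulLeft (u : R)) u.isUnit.mul_right_injective x

theorem addOrderOf_eq_of_sameCycle_toPerm {u : Rˣ} {x y : R}
    (h : (MulAction.toPerm u : Equiv.Perm R).SameCycle x y) : addOrderOf x = addOrderOf y := by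
  obtain ⟨k, rfl⟩ := h
  rw [MulAction.toPerm_zpow_apply, Units.smul_def, smul_eq_mul, addOrderOf_units_mul]

end Units

namespace ZMod

section Cast

variable {N d : ℕ} [NeZero N]

theorem mul_eq_zero_iff_castHom_eq_zero (hd : d ∣ N) {x : ZMod N} (hx : addOrderOf x = d)
    (c : ZMod N) : c * x = 0 ↔ castHom hd (ZMod d) c = 0 := by
  rw [castHom_apply, cast_eq_val, natCast_eq_zero_iff, ← hx, addOrderOf_dvd_iff_nsmul_eq_zero,
    nsmul_eq_mul, natCast_zmod_val]

theorem toPerm_pow_apply_eq_mul_iff (hd : d ∣ N) (u : (ZMod N)ˣ) {x : ZMod N}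
    (hx : addOrderOf x = d) (k : ℕ) (c : ZMod N) :
    (MulAction.toPerm u ^ k : Equiv.Perm (ZMod N)) x = c * x ↔
      castHom hd (ZMod d) u ^ k = castHom hd (ZMod d) c := by
  rw [MulAction.toPerm_pow_apply, Units.smul_def, smul_eq_mul, Units.val_pow_eq_pow_val,
    ← sub_eq_zero, ← sub_mul, mul_eq_zero_iff_castHom_eq_zero hd hx, map_sub, map_pow,
    sub_eq_zero]

end Cast

section TwoPow

variable {l m r : ℕ}

theorem orderOf_three_two_pow_add_three (n : ℕ) :
    orderOf (3 : ZMod (2 ^ (n + 3))) = 2 ^ (n + 1) := by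
  -- `3 ^ 2 = 1 + 2 ^ 3`
  have h9 : orderOf ((3 : ZMod (2 ^ (n + 3))) ^ 2) = 2 ^ n := by
    convert orderOf_one_add_mul_prime_pow Nat.prime_two 3 (by norm_num) (by norm_num) 1
      (by norm_num) n using 2
    norm_num
  apply orderOf_eq_prime_pow
  · rcases n with _ | n
    · decide
    · rw [pow_succ' 2 n, pow_mul, ← orderOf_dvd_iff_pow_eq_one, h9]
      exact Nat.pow_dvd_pow_iff_le_right'.not.mpr (by omega)
  · rw [pow_succ' 2 n, pow_mul, ← h9, pow_orderOf_eq_one]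

theorem orderOf_three_pow_two_pow (hr : Odd r) (hl : 3 ≤ l) :
    orderOf ((3 : ZMod (2 ^ l)) ^ r) = 2 ^ (l - 2) := by
  obtain ⟨n, rfl⟩ := Nat.exists_eq_add_of_le' hl
  rw [Nat.Coprime.orderOf_pow, orderOf_three_two_pow_add_three]
  · rfl
  · rw [orderOf_three_two_pow_add_three]
    exact (Nat.coprime_two_left.mpr hr).pow_left _

theorem orderOf_three_pow_four (hr : Odd r) : orderOf ((3 : ZMod (2 ^ 2)) ^ r) = 2 := by
  have h3 : orderOf (3 : ZMod (2 ^ 2)) = 2 := orderOf_eq_prime (by decide) (by decide)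
  rw [Nat.Coprime.orderOf_pow (by rw [h3]; exact Nat.coprime_two_left.mpr hr), h3]

theorem two_eq_zero_iff : (2 : ZMod (2 ^ l)) = 0 ↔ l ≤ 1 := by
  rw [show (2 : ZMod (2 ^ l)) = ((2 ^ 1 : ℕ) : ZMod (2 ^ l)) by simp, natCast_eq_zero_iff,
    Nat.pow_dvd_pow_iff_le_right (by norm_num)]

theorem two_le_orderOf_three_pow (hr : Odd r) (hl : 2 ≤ l) :
    2 ≤ orderOf ((3 : ZMod (2 ^ l)) ^ r) := by
  rcases hl.eq_or_lt with rfl | hl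
  · rw [orderOf_three_pow_four hr]
  · rw [orderOf_three_pow_two_pow hr hl]
    exact Nat.le_self_pow (by omega) 2

theorem three_pow_eq_one_iff (hr : Odd r) : (3 : ZMod (2 ^ l)) ^ r = 1 ↔ l ≤ 1 := by
  rcases le_or_gt l 1 with hl | hl
  · rw [show (3 : ZMod (2 ^ l)) = 2 + 1 by norm_num, two_eq_zero_iff.mpr hl]
    simpa using hl
  · have := two_le_orderOf_three_pow hr hl
    rw [← orderOf_eq_one_iff]
    omega

theorem three_pow_ne_neg_one (hl : 3 ≤ l) (k : ℕ) : (3 : ZMod (2 ^ l)) ^ k ≠ -1 := by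
  intro h
  have h8 := congrArg (castHom (pow_dvd_pow 2 hl) (ZMod (2 ^ 3))) h
  rw [map_pow, map_neg, map_one, map_ofNat] at h8
  obtain ⟨j, rfl | rfl⟩ := Nat.even_or_odd' k
  · rw [pow_mul, show (3 : ZMod (2 ^ 3)) ^ 2 = 1 from rfl, one_pow] at h8
    exact absurd h8 (by decide)
  · rw [pow_succ (3 : ZMod (2 ^ 3)), pow_mul, show (3 : ZMod (2 ^ 3)) ^ 2 = 1 from rfl, one_pow,
      one_mul] at h8
    exact absurd h8 (by decide)

theorem addOrderOf_two_pow_sub (hl : l ≤ m) :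
    addOrderOf ((2 : ZMod (2 ^ m)) ^ (m - l)) = 2 ^ l := by
  rw [show (2 : ZMod (2 ^ m)) ^ (m - l) = ((2 ^ (m - l) : ℕ) : ZMod (2 ^ m)) by simp,
    addOrderOf_coe _ (by positivity), Nat.gcd_eq_right (pow_dvd_pow 2 (m.sub_le l)),
    Nat.pow_div (m.sub_le l) two_pos, Nat.sub_sub_self hl]

theorem two_mul_eq_zero_iff (hm : 1 ≤ m) (x : ZMod (2 ^ m)) :
    2 * x = 0 ↔ x = 0 ∨ x = 2 ^ (m - 1) := by
  have h2m : 2 ^ m = 2 * 2 ^ (m - 1) := by rw [← pow_succ']; congr; omega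
  constructor
  · intro h
    obtain ⟨c, hc⟩ : 2 ^ (m - 1) ∣ x.val := by
      refine Nat.dvd_of_mul_dvd_mul_left two_pos (h2m ▸ (natCast_eq_zero_iff _ _).mp ?_)
      push_cast
      rwa [natCast_zmod_val]
    have hc2 : c < 2 := by
      have := x.val_lt
      rw [hc, h2m, mul_comm 2] at this
      exact Nat.lt_of_mul_lt_mul_left this
    interval_cases c
    · left; rwa [← val_eq_zero]
    · right; rw [← natCast_zmod_val x, hc]; simp
  · rintro (rfl | rfl)
    · simp
    · rw [← pow_succ', show m - 1 + 1 = m by omega]; exact_mod_cast natCast_self (2 ^ m)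

theorem three_pow_mul_eq_self_iff (hr : Odd r) (x : ZMod (2 ^ m)) :
    (3 : ZMod (2 ^ m)) ^ r * x = x ↔ 2 * x = 0 := by
  -- both sides only depend on the additive order `2 ^ l` of `x`, and both hold iff `l ≤ 1`
  obtain ⟨l, hlm, hl⟩ := (Nat.dvd_prime_pow Nat.prime_two).mp
    ((addOrderOf_dvd_card (x := x)).trans (card (2 ^ m)).dvd)
  have hd : 2 ^ l ∣ 2 ^ m := pow_dvd_pow 2 hlm
  rw [← sub_eq_zero, ← sub_one_mul, mul_eq_zero_iff_castHom_eq_zero hd hl,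
    mul_eq_zero_iff_castHom_eq_zero hd hl, map_sub, map_pow, map_ofNat, map_one, sub_eq_zero,
    map_ofNat, three_pow_eq_one_iff hr, two_eq_zero_iff]

theorem two_pow_pred_ne_zero (hm : 1 ≤ m) : (2 : ZMod (2 ^ m)) ^ (m - 1) ≠ 0 := by
  intro h
  have := addOrderOf_two_pow_sub (m := m) hm
  rw [h, addOrderOf_zero] at this
  omega

theorem card_three_pow_mul_eq_self (hm : 1 ≤ m) (hr : Odd r) :
    Nat.card {x : ZMod (2 ^ m) | (3 : ZMod (2 ^ m)) ^ r * x = x} = 2 := by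
  have : {x : ZMod (2 ^ m) | (3 : ZMod (2 ^ m)) ^ r * x = x} = {0, 2 ^ (m - 1)} := by
    ext x
    simp [three_pow_mul_eq_self_iff hr, two_mul_eq_zero_iff hm]
  rw [this, Nat.card_coe_set_eq, Set.ncard_pair (two_pow_pred_ne_zero hm).symm]

end TwoPow

end ZMod

theorem sum_Icc_three_two_mul_two_pow {m : ℕ} (hm : 3 ≤ m) :
    ∑ l ∈ Icc 3 m, 2 * 2 ^ (l - 2) + 4 = 2 ^ m := by
  induction m, hm using Nat.le_induction with
  | base => rfl
  | succ m hm ih =>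
    rw [sum_Icc_succ_top (by omega), add_right_comm, ih,
      show m + 1 - 2 = m - 1 by omega, ← pow_succ', Nat.sub_add_cancel (by omega), pow_succ]
    ring

def cycleReps (m : ℕ) : Finset (ℕ × ℤ) := insert (2, 1) (Icc 3 m ×ˢ {1, -1})

def cycleRep (m : ℕ) (i : ℕ × ℤ) : ZMod (2 ^ m) := i.2 * 2 ^ (m - i.1)

section CycleReps

open ZMod

variable {m : ℕ}

theorem mem_cycleReps {i : ℕ × ℤ} :
    i ∈ cycleReps m ↔ i = (2, 1) ∨ (3 ≤ i.1 ∧ i.1 ≤ m) ∧ (i.2 = 1 ∨ i.2 = -1) := by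
  simp [cycleReps]

theorem sum_cycleReps {β : Type*} [AddCommMonoid β] (g : ℕ → β) :
    ∑ i ∈ cycleReps m, g i.1 = g 2 + ∑ l ∈ Icc 3 m, 2 • g l := by
  rw [cycleReps, sum_insert (by simp), sum_product]
  simp

theorem fst_mem_Icc_of_mem_cycleReps (hm : 2 ≤ m) {i : ℕ × ℤ} (hi : i ∈ cycleReps m) :
    i.1 ∈ Icc 2 m := by
  rcases mem_cycleReps.mp hi with rfl | ⟨hl, -⟩
  · exact mem_Icc.mpr ⟨le_rfl, hm⟩
  · exact mem_Icc.mpr ⟨by omega, hl.2⟩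

theorem addOrderOf_cycleRep (hm : 2 ≤ m) {i : ℕ × ℤ} (hi : i ∈ cycleReps m) :
    addOrderOf (cycleRep m i) = 2 ^ i.1 := by
  have hlm := (mem_Icc.mp (fst_mem_Icc_of_mem_cycleReps hm hi)).2
  have he : i.2 = 1 ∨ i.2 = -1 := by
    rcases mem_cycleReps.mp hi with rfl | ⟨-, he⟩
    · exact Or.inl rfl
    · exact he
  rcases he with he | he <;> simp [cycleRep, he, addOrderOf_two_pow_sub hlm]

theorem cycleRep_eq_neg_of_fst_eq {i j : ℕ × ℤ} (hi : i ∈ cycleReps m)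
    (hj : j ∈ cycleReps m) (hij : i ≠ j) (hl : i.1 = j.1) :
    3 ≤ i.1 ∧ cycleRep m j = -cycleRep m i := by
  obtain ⟨l, e⟩ := i
  obtain ⟨l', e'⟩ := j
  dsimp only at hl
  subst hl
  rcases mem_cycleReps.mp hi with hi | ⟨hl, he⟩ <;>
    rcases mem_cycleReps.mp hj with hj | ⟨hl', he'⟩
  · exact absurd (hi.trans hj.symm) hij
  · simp_all
  · simp_all
  · have : e' = -e := by simp_all; omega
    exact ⟨hl.1, by simp [cycleRep, this]⟩

end CycleReps

section ThreePow

open Equiv ZMod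

variable {m r : ℕ} {u : (ZMod (2 ^ m))ˣ}

theorem castHom_units_eq_three_pow (hu : (u : ZMod (2 ^ m)) = 3 ^ r) {d : ℕ} (hd : d ∣ 2 ^ m) :
    castHom hd (ZMod d) u = 3 ^ r := by
  rw [hu, map_pow, map_ofNat]

theorem support_toPerm_three_pow (hm : 1 ≤ m) (hr : Odd r) (hu : (u : ZMod (2 ^ m)) = 3 ^ r) :
    (MulAction.toPerm u : Perm (ZMod (2 ^ m))).support = {0, 2 ^ (m - 1)}ᶜ := by
  ext x
  rw [Perm.mem_support, MulAction.toPerm_apply, Units.smul_def, smul_eq_mul, hu, Ne,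
    three_pow_mul_eq_self_iff hr, two_mul_eq_zero_iff hm]
  simp

theorem card_support_toPerm_three_pow (hm : 1 ≤ m) (hr : Odd r)
    (hu : (u : ZMod (2 ^ m)) = 3 ^ r) :
    #(MulAction.toPerm u : Perm (ZMod (2 ^ m))).support = 2 ^ m - 2 := by
  rw [support_toPerm_three_pow hm hr hu, card_compl, ZMod.card,
    card_pair (two_pow_pred_ne_zero hm).symm]

theorem card_support_cycleOf_toPerm_three_pow (hr : Odd r) (hu : (u : ZMod (2 ^ m)) = 3 ^ r)
    {l : ℕ} (hl : 2 ≤ l) (hlm : l ≤ m) {x : ZMod (2 ^ m)} (hx : addOrderOf x = 2 ^ l) :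
    #((MulAction.toPerm u : Perm (ZMod (2 ^ m))).cycleOf x).support =
      orderOf ((3 : ZMod (2 ^ l)) ^ r) := by
  have hd : 2 ^ l ∣ 2 ^ m := pow_dvd_pow 2 hlm
  refine Perm.card_support_cycleOf_eq_of_pow_apply_eq_self_iff ?_ fun k => ?_
  · have := two_le_orderOf_three_pow hr hl
    omega
  · have := toPerm_pow_apply_eq_mul_iff hd u hx k 1
    rwa [one_mul, map_one, castHom_units_eq_three_pow hu, ← orderOf_dvd_iff_pow_eq_one] at this

theorem not_sameCycle_neg_toPerm_three_pow (hu : (u : ZMod (2 ^ m)) = 3 ^ r) {l : ℕ}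
    (hl : 3 ≤ l) (hlm : l ≤ m) {x : ZMod (2 ^ m)} (hx : addOrderOf x = 2 ^ l) :
    ¬(MulAction.toPerm u : Perm (ZMod (2 ^ m))).SameCycle x (-x) := by
  intro h
  obtain ⟨k, -, hk⟩ := h.exists_pow_eq'
  rw [← neg_one_mul x, toPerm_pow_apply_eq_mul_iff (pow_dvd_pow 2 hlm) u hx,
    castHom_units_eq_three_pow hu, map_neg, map_one, ← pow_mul] at hk
  exact three_pow_ne_neg_one hl _ hk

theorem pairwise_not_sameCycle_cycleRep (hm : 2 ≤ m)
    (hu : (u : ZMod (2 ^ m)) = 3 ^ r) :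
    (cycleReps m : Set (ℕ × ℤ)).Pairwise fun i j =>
      ¬(MulAction.toPerm u : Perm (ZMod (2 ^ m))).SameCycle (cycleRep m i) (cycleRep m j) := by
  intro i hi j hj hij hsc
  have hl : i.1 = j.1 := Nat.pow_right_injective le_rfl <| show 2 ^ i.1 = 2 ^ j.1 by
    rw [← addOrderOf_cycleRep hm hi, ← addOrderOf_cycleRep hm hj]
    exact addOrderOf_eq_of_sameCycle_toPerm hsc
  obtain ⟨hl3, hneg⟩ := cycleRep_eq_neg_of_fst_eq hi hj hij hl
  exact not_sameCycle_neg_toPerm_three_pow hu hl3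
    (mem_Icc.mp (fst_mem_Icc_of_mem_cycleReps hm hi)).2 (addOrderOf_cycleRep hm hi) (hneg ▸ hsc)

theorem cycleType_toPerm_three_pow (hm : 3 ≤ m) (hr : Odd r)
    (hu : (u : ZMod (2 ^ m)) = 3 ^ r) :
    (MulAction.toPerm u : Perm (ZMod (2 ^ m))).cycleType =
      {2} + ∑ l ∈ Icc 3 m, Multiset.replicate 2 (2 ^ (l - 2)) := by
  set σ : Perm (ZMod (2 ^ m)) := MulAction.toPerm u
  have hlen : ∀ i ∈ cycleReps m,
      #(σ.cycleOf (cycleRep m i)).support = orderOf ((3 : ZMod (2 ^ i.1)) ^ r) := fun i hi =>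
    have hl := mem_Icc.mp (fst_mem_Icc_of_mem_cycleReps (by omega) hi)
    card_support_cycleOf_toPerm_three_pow hr hu hl.1 hl.2 (addOrderOf_cycleRep (by omega) hi)
  have hord : ∀ l ∈ Icc 3 m, orderOf ((3 : ZMod (2 ^ l)) ^ r) = 2 ^ (l - 2) :=
    fun l hl => orderOf_three_pow_two_pow hr (mem_Icc.mp hl).1
  have hcard : #σ.support ≤ ∑ i ∈ cycleReps m, #(σ.cycleOf (cycleRep m i)).support := by
    rw [card_support_toPerm_three_pow (by omega) hr hu, sum_congr rfl hlen,
      sum_cycleReps fun l => orderOf ((3 : ZMod (2 ^ l)) ^ r), orderOf_three_pow_four hr,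
      sum_congr rfl fun l hl => by rw [hord l hl, smul_eq_mul],
      ← sum_Icc_three_two_mul_two_pow hm]
    omega
  have hmem : ∀ i ∈ cycleReps m, cycleRep m i ∈ σ.support := fun i hi =>
    Perm.mem_support.mpr <| Perm.two_le_card_support_cycleOf_iff.mp <| (hlen i hi).symm ▸
      two_le_orderOf_three_pow hr (mem_Icc.mp (fst_mem_Icc_of_mem_cycleReps (by omega) hi)).1
  rw [Perm.cycleType_eq_sum_of_pairwise_not_sameCycle σ _ _ hmem
      (pairwise_not_sameCycle_cycleRep (by omega) hu) hcard,
    sum_congr rfl fun i hi => congrArg _ (hlen i hi),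
    sum_cycleReps fun l => ({orderOf ((3 : ZMod (2 ^ l)) ^ r)} : Multiset ℕ),
    orderOf_three_pow_four hr]
  exact congrArg _ (sum_congr rfl fun l hl => by rw [hord l hl, Multiset.nsmul_singleton])

end ThreePow

/-- Let `m ≥ 3` and `r` odd. The permutation `π_a` of `ℤ_{2^m}`
given by multiplication by `a = 3^r` has cycle type
`x_1^2 · x_2 · Π_{l=3}^{m} x_{2^(l−2)}^2`: it has exactly `2` fixed points, one
`2`-cycle, and for each `3 ≤ l ≤ m` exactly two cycles of length `2^(l−2)`
(the cycle type multiset records the nontrivial cycle lengths). -/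
theorem cycle_type_three_pow_odd (m r : ℕ) (hm : 3 ≤ m) (hr : Odd r) :
    Nat.card {x : ZMod (2 ^ m) | (3 : ZMod (2 ^ m)) ^ r * x = x} = 2 ∧
    Equiv.Perm.cycleType
        (MulAction.toPerm
          (ZMod.unitOfCoprime (3 ^ r) (Nat.Coprime.pow r m (by norm_num)) :
            (ZMod (2 ^ m))ˣ) :
          Equiv.Perm (ZMod (2 ^ m)))
      = {2} + ∑ l ∈ Finset.Icc 3 m, Multiset.replicate 2 (2 ^ (l - 2)) :=
  ⟨ZMod.card_three_pow_mul_eq_self (by omega) hr,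
    cycleType_toPerm_three_pow hm hr (by simp)⟩
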